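/- Let s > 0, τ ∈ ℝ and γ ∈ (0,1). For z ∈ ℂ ∖ ℝ define the 4×4 matrices 𝖩₁(z) = I + e^{−θ₁(sz)+θ₂(sz)+2τsz}·E_{1,2} + (1−γ)^{−1}e^{2θ₂(sz)}·E_{4,2} − e^{−θ₁(sz)+θ₂(sz)−2τsz}·E_{4,3}, 𝖩₂(z) = I − e^{−θ₁(sz)+θ₂(sz)+2τsz}·E_{1,2} + (1−γ)^{−1}e^{2θ₂(sz)}·E_{4,2} + e^{−θ₁(sz)+θ₂(sz)−2τsz}·E_{4,3}, 𝖩₃(z) = I + e^{θ₁(sz)−θ₂(sz)−2τsz}·E_{2,1} + (1−γ)^{−1}e^{2θ₁(sz)}·E_{3,1} − e^{θ₁(sz)−θ₂(sz)+2τsz}·E_{3,4}, and 𝖩₄(z) = I − e^{θ₁(sz)−θ₂(sz)−2τsz}·E_{2,1} + (1−γ)^{−1}e^{2θ₁(sz)}·E_{3,1} + e^{θ₁(sz)−θ₂(sz)+2τsz}·E_{3,4}. Then: (a) 𝖩_j(z)^{−1} = 2I − 𝖩_j(z) for j = 1,2,3,4 and all z ∈ ℂ ∖ ℝ; (b) for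 every x ∈ (−1,0), the matrix 𝖩_𝖫(x) = [[1, 0, (1−γ)e^{−2θ₁(sx)}, (1−γ)e^{−θ₁(sx)−θ_{2,+}(sx)+2τsx}],[0, e^{θ_{2,+}(sx)−θ_{2,−}(sx)}, (1−γ)e^{−θ₁(sx)−θ_{2,−}(sx)−2τsx}, 1−γ],[0,0,1,0],[0,0,0,e^{θ_{2,−}(sx)−θ_{2,+}(sx)}]] satisfies 𝖩_𝖫(x) = 𝖩_{1,−}(x)·[[1,0,0,0],[0,0,0,1−γ],[0,0,1,0],[0,1/(γ−1),0,0]]·𝖩_{2,+}(x); and (c) for every x ∈ (0,1), the matrix 𝖩_𝖱(x) = [[e^{θ_{1,+}(sx)−θ_{1,−}(sx)}, 0, 1−γ, (1−γ)e^{−θ_{1,−}(sx)−θ₂(sx)+2τsx}],[0, 1, (1−γ)e^{−θ_{1,+}(sx)−θ₂(sx)−2τsx}, (1−γ)e^{−2θ₂(sx)}],[0,0,e^{θ_{1,−}(sx)−θ_{1,+}(sx)},0],[0,0,0,1]] satisfies 𝖩_𝖱(x) = 𝖩_{3,−}(x)·[[0,0,1−γ,0],[0,1,0,0],[1/(γ−1),0,0,0],[0,0,0,1]]·𝖩_{4,+}(x),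 where 𝖩_{j,±}(x) = lim_{ε→0⁺} 𝖩_j(x ± iε). -/

import Mathlib

open Complex Filter Topology Set Matrix

/-- `θ₁(z) = (2/3)r₁(-z)^{3/2} + 2s₁(-z)^{1/2}`, principal branches. -/
noncomputable def theta1 (r₁ s₁ : ℝ) (z : ℂ) : ℂ :=
  (2/3 : ℂ) * r₁ * (-z) ^ ((3:ℂ)/2) + 2 * (s₁ : ℂ) * (-z) ^ ((1:ℂ)/2)

/-- `θ₂(z) = (2/3)r₂ z^{3/2} + 2s₂ z^{1/2}`, principal branches. -/
noncomputable def theta2 (r₂ s₂ : ℝ) (z : ℂ) : ℂ :=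
  (2/3 : ℂ) * r₂ * z ^ ((3:ℂ)/2) + 2 * (s₂ : ℂ) * z ^ ((1:ℂ)/2)

/-- `E_{j,k}` (with 1-based indices shifted to `Fin 4`). -/
noncomputable def Estd (i j : Fin 4) : Matrix (Fin 4) (Fin 4) ℂ :=
  Matrix.single i j 1

/-- `𝖩₁(z)`. -/
noncomputable def sfJ1 (r₁ r₂ s₁ s₂ s τ γ : ℝ) (z : ℂ) : Matrix (Fin 4) (Fin 4) ℂ :=
  1 + Complex.exp (-theta1 r₁ s₁ (s * z) + theta2 r₂ s₂ (s * z) + 2 * τ * s * z) • Estd 0 1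
    + (((1:ℂ) - γ)⁻¹ * Complex.exp (2 * theta2 r₂ s₂ (s * z))) • Estd 3 1
    - Complex.exp (-theta1 r₁ s₁ (s * z) + theta2 r₂ s₂ (s * z) - 2 * τ * s * z) • Estd 3 2

/-- `𝖩₂(z)`. -/
noncomputable def sfJ2 (r₁ r₂ s₁ s₂ s τ γ : ℝ) (z : ℂ) : Matrix (Fin 4) (Fin 4) ℂ :=
  1 - Complex.exp (-theta1 r₁ s₁ (s * z) + theta2 r₂ s₂ (s * z) + 2 * τ * s * z) • Estd 0 1
    + (((1:ℂ) - γ)⁻¹ * Complex.exp (2 * theta2 r₂ s₂ (s * z))) • Estd 3 1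
    + Complex.exp (-theta1 r₁ s₁ (s * z) + theta2 r₂ s₂ (s * z) - 2 * τ * s * z) • Estd 3 2

/-- `𝖩₃(z)`. -/
noncomputable def sfJ3 (r₁ r₂ s₁ s₂ s τ γ : ℝ) (z : ℂ) : Matrix (Fin 4) (Fin 4) ℂ :=
  1 + Complex.exp (theta1 r₁ s₁ (s * z) - theta2 r₂ s₂ (s * z) - 2 * τ * s * z) • Estd 1 0
    + (((1:ℂ) - γ)⁻¹ * Complex.exp (2 * theta1 r₁ s₁ (s * z))) • Estd 2 0
    - Complex.exp (theta1 r₁ s₁ (s * z) - theta2 r₂ s₂ (s * z) + 2 * τ * s * z) • Estd 2 3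

/-- `𝖩₄(z)`. -/
noncomputable def sfJ4 (r₁ r₂ s₁ s₂ s τ γ : ℝ) (z : ℂ) : Matrix (Fin 4) (Fin 4) ℂ :=
  1 - Complex.exp (theta1 r₁ s₁ (s * z) - theta2 r₂ s₂ (s * z) - 2 * τ * s * z) • Estd 1 0
    + (((1:ℂ) - γ)⁻¹ * Complex.exp (2 * theta1 r₁ s₁ (s * z))) • Estd 2 0
    + Complex.exp (theta1 r₁ s₁ (s * z) - theta2 r₂ s₂ (s * z) + 2 * τ * s * z) • Estd 2 3

/-!
Each `𝖩ⱼ` is `1 + N` with `N` supported on rows disjoint from its columns, so `N² = 0` and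
`(1 + N)⁻¹ = 1 - N = 2 - 𝖩ⱼ`.

On `(-∞, 0)` the function `θ₂` has boundary values `θ₂,₊ = θ₂` and `θ₂,₋ = -θ₂`: the logarithm
jumps by `-2πi` across the cut, which multiplies `z^{3/2}` and `z^{1/2}` by `e^{-3πi} = e^{-πi} = -1`,
while `θ₁` is continuous there; symmetrically on `(0, ∞)` with the roles of `θ₁` and `θ₂` exchanged.
Given `θ₊ + θ₋ = 0`, both factorizations are identities between explicit `4 × 4` matrices whose
entries are exponentials.
-/

open scoped Real

theorem Continuous.tendsto_comp₃ {X Y Z W : Type*} [TopologicalSpace X] [TopologicalSpace Y]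
    [TopologicalSpace Z] [TopologicalSpace W] {F : X → Y → Z → W}
    (hF : Continuous fun p : X × Y × Z => F p.1 p.2.1 p.2.2) {α : Type*} {l : Filter α}
    {f : α → X} {g : α → Y} {h : α → Z} {x : X} {y : Y} {z : Z} (hf : Tendsto f l (𝓝 x))
    (hg : Tendsto g l (𝓝 y)) (hh : Tendsto h l (𝓝 z)) :
    Tendsto (fun a => F (f a) (g a) (h a)) l (𝓝 (F x y z)) :=
  (hF.tendsto _).comp (hf.prodMk_nhds (hg.prodMk_nhds hh))

theorem mul_two_smul_one_sub_self {R : Type*} [Ring R] {J : R} (hJ : (J - 1) * (J - 1) = 0) :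
    J * (2 • 1 - J) = 1 :=
  calc J * (2 • 1 - J) = 1 - (J - 1) * (J - 1) := by rw [two_smul]; noncomm_ring
    _ = 1 := by rw [hJ, sub_zero]

noncomputable section

namespace GapTacnode

lemma tendsto_ofReal_add_mul_I_nhdsWithin_im_pos (w : ℝ) :
    Tendsto (fun ε : ℝ => (w : ℂ) + ε * I) (𝓝[>] 0) (𝓝[{z : ℂ | 0 < z.im}] w) := by
  refine tendsto_nhdsWithin_of_tendsto_nhds_of_eventually_within _ ?_ ?_
  · simpa using ((continuous_ofReal.mul continuous_const).tendsto' 0 0 (by simp)).const_add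
      (w : ℂ) |>.mono_left nhdsWithin_le_nhds
  · filter_upwards [self_mem_nhdsWithin] with ε (hε : 0 < ε)
    simpa using hε

lemma tendsto_ofReal_sub_mul_I_nhdsWithin_im_neg (w : ℝ) :
    Tendsto (fun ε : ℝ => (w : ℂ) - ε * I) (𝓝[>] 0) (𝓝[{z : ℂ | z.im < 0}] w) := by
  refine tendsto_nhdsWithin_of_tendsto_nhds_of_eventually_within _ ?_ ?_
  · simpa using ((continuous_ofReal.mul continuous_const).tendsto' 0 0 (by simp)).const_sub
      (w : ℂ) |>.mono_left nhdsWithin_le_nhds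
  · filter_upwards [self_mem_nhdsWithin] with ε (hε : 0 < ε)
    simpa using hε

lemma tendsto_ofReal_mul_nhdsWithin_im_pos {c : ℝ} (hc : 0 < c) (w : ℂ) :
    Tendsto (fun z => (c : ℂ) * z) (𝓝[{z : ℂ | 0 < z.im}] w) (𝓝[{z : ℂ | 0 < z.im}] (c * w)) :=
  (continuous_const.mul continuous_id).continuousWithinAt.tendsto_nhdsWithin
    fun z (hz : 0 < z.im) => by simpa using mul_pos hc hz

lemma tendsto_ofReal_mul_nhdsWithin_im_neg {c : ℝ} (hc : 0 < c) (w : ℂ) :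
    Tendsto (fun z => (c : ℂ) * z) (𝓝[{z : ℂ | z.im < 0}] w) (𝓝[{z : ℂ | z.im < 0}] (c * w)) :=
  (continuous_const.mul continuous_id).continuousWithinAt.tendsto_nhdsWithin
    fun z (hz : z.im < 0) => by simpa using mul_neg_of_pos_of_neg hc hz

lemma tendsto_mul_add_mul_I_nhdsWithin_im_pos {s : ℝ} (hs : 0 < s) (x : ℝ) :
    Tendsto (fun ε : ℝ => (s : ℂ) * (x + ε * I)) (𝓝[>] 0)
      (𝓝[{z : ℂ | 0 < z.im}] (s * x : ℝ)) := by
  rw [ofReal_mul]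
  exact (tendsto_ofReal_mul_nhdsWithin_im_pos hs _).comp
    (tendsto_ofReal_add_mul_I_nhdsWithin_im_pos x)

lemma tendsto_mul_sub_mul_I_nhdsWithin_im_neg {s : ℝ} (hs : 0 < s) (x : ℝ) :
    Tendsto (fun ε : ℝ => (s : ℂ) * (x - ε * I)) (𝓝[>] 0)
      (𝓝[{z : ℂ | z.im < 0}] (s * x : ℝ)) := by
  rw [ofReal_mul]
  exact (tendsto_ofReal_mul_nhdsWithin_im_neg hs _).comp
    (tendsto_ofReal_sub_mul_I_nhdsWithin_im_neg x)

lemma tendsto_neg_nhdsWithin_im_pos (w : ℂ) :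
    Tendsto Neg.neg (𝓝[{z : ℂ | 0 < z.im}] w) (𝓝[{z : ℂ | z.im < 0}] (-w)) :=
  continuous_neg.continuousWithinAt.tendsto_nhdsWithin fun z (hz : 0 < z.im) => by simpa using hz

lemma tendsto_neg_nhdsWithin_im_neg (w : ℂ) :
    Tendsto Neg.neg (𝓝[{z : ℂ | z.im < 0}] w) (𝓝[{z : ℂ | 0 < z.im}] (-w)) :=
  continuous_neg.continuousWithinAt.tendsto_nhdsWithin fun z (hz : z.im < 0) => by simpa using hz

lemma tendsto_cpow_const_nhdsWithin_im_pos {w : ℂ} (hre : w.re < 0) (him : w.im = 0) (c : ℂ) :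
    Tendsto (· ^ c) (𝓝[{z : ℂ | 0 < z.im}] w) (𝓝 (w ^ c)) := by
  have hlog := ((continuousWithinAt_log_of_re_neg_of_im_zero hre him).mono
    fun z (hz : 0 < z.im) => hz.le).tendsto
  rw [cpow_def_of_ne_zero (by rintro rfl; simp at hre)]
  refine ((continuous_exp.tendsto _).comp (hlog.mul_const c)).congr' ?_
  filter_upwards [self_mem_nhdsWithin] with z (hz : 0 < z.im)
  simp [cpow_def_of_ne_zero (show z ≠ 0 by rintro rfl; simp at hz)]

lemma tendsto_cpow_const_nhdsWithin_im_neg {w : ℂ} (hre : w.re < 0) (him : w.im = 0) (c : ℂ) :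
    Tendsto (· ^ c) (𝓝[{z : ℂ | z.im < 0}] w) (𝓝 (exp (-2 * π * I * c) * w ^ c)) := by
  have hlim : exp ((Real.log ‖w‖ - π * I) * c) = exp (-2 * π * I * c) * w ^ c := by
    rw [cpow_def_of_ne_zero (by rintro rfl; simp at hre), ← exp_add, log,
      arg_eq_pi_iff.2 ⟨hre, him⟩]
    ring_nf
  rw [← hlim]
  refine ((continuous_exp.tendsto _).comp
    ((tendsto_log_nhdsWithin_im_neg_of_re_neg_of_im_zero hre him).mul_const c)).congr' ?_
  filter_upwards [self_mem_nhdsWithin] with z (hz : z.im < 0)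
  simp [cpow_def_of_ne_zero (show z ≠ 0 by rintro rfl; simp at hz)]

lemma tendsto_theta2_nhdsWithin_im_pos {w : ℝ} (hw : w < 0) (r s : ℝ) :
    Tendsto (theta2 r s) (𝓝[{z : ℂ | 0 < z.im}] w) (𝓝 (theta2 r s w)) :=
  have hre : (w : ℂ).re < 0 := by simpa using hw
  (tendsto_const_nhds.mul (tendsto_cpow_const_nhdsWithin_im_pos hre (ofReal_im w) _)).add
    (tendsto_const_nhds.mul (tendsto_cpow_const_nhdsWithin_im_pos hre (ofReal_im w) _))

lemma tendsto_theta2_nhdsWithin_im_neg {w : ℝ} (hw : w < 0) (r s : ℝ) :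
    Tendsto (theta2 r s) (𝓝[{z : ℂ | z.im < 0}] w) (𝓝 (-theta2 r s w)) := by
  have hre : (w : ℂ).re < 0 := by simpa using hw
  have h₃ : exp (-2 * π * I * (3 / 2)) = -1 := by
    rw [show -2 * π * I * (3 / 2) = (-3 : ℤ) * (π * I) by push_cast; ring, exp_int_mul,
      exp_pi_mul_I]; norm_num
  have h₁ : exp (-2 * π * I * (1 / 2)) = -1 := by
    rw [show -2 * π * I * (1 / 2) = -(π * I) by ring, exp_neg, exp_pi_mul_I]; norm_num
  have := (tendsto_const_nhds (x := (2 / 3 : ℂ) * r)).mul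
      (tendsto_cpow_const_nhdsWithin_im_neg hre (ofReal_im w) (3 / 2)) |>.add
    ((tendsto_const_nhds (x := 2 * (s : ℂ))).mul
      (tendsto_cpow_const_nhdsWithin_im_neg hre (ofReal_im w) (1 / 2)))
  rw [h₃, h₁] at this
  convert this using 2 <;> simp only [theta2]
  ring

lemma continuousAt_theta2 {w : ℂ} (hw : w ∈ slitPlane) (r s : ℝ) :
    ContinuousAt (theta2 r s) w :=
  (continuousAt_const.mul (continuousAt_cpow_const hw)).add
    (continuousAt_const.mul (continuousAt_cpow_const hw))

lemma continuousAt_theta1 {w : ℂ} (hw : -w ∈ slitPlane) (r s : ℝ) :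
    ContinuousAt (theta1 r s) w :=
  (continuousAt_theta2 hw r s).comp continuousAt_neg

lemma tendsto_theta1_nhdsWithin_im_pos {w : ℝ} (hw : 0 < w) (r s : ℝ) :
    Tendsto (theta1 r s) (𝓝[{z : ℂ | 0 < z.im}] w) (𝓝 (-theta1 r s w)) := by
  have h := tendsto_theta2_nhdsWithin_im_neg (neg_neg_of_pos hw) r s
  rw [ofReal_neg] at h
  exact h.comp (tendsto_neg_nhdsWithin_im_pos w)

lemma tendsto_theta1_nhdsWithin_im_neg {w : ℝ} (hw : 0 < w) (r s : ℝ) :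
    Tendsto (theta1 r s) (𝓝[{z : ℂ | z.im < 0}] w) (𝓝 (theta1 r s w)) := by
  have h := tendsto_theta2_nhdsWithin_im_pos (neg_neg_of_pos hw) r s
  rw [ofReal_neg] at h
  exact h.comp (tendsto_neg_nhdsWithin_im_neg w)

section LensFactors

variable (γ θ η t : ℂ)

/- `𝖩ⱼ` as a function of the values `θ = θ₁(sz)`, `η = θ₂(sz)` and `t = 2τsz`: each `sfJj`
unfolds definitionally to `Jⱼ γ (θ₁ (s z)) (θ₂ (s z)) (2 τ s z)`. -/
def J₁ : Matrix (Fin 4) (Fin 4) ℂ :=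
  1 + exp (-θ + η + t) • Estd 0 1 + ((1 - γ)⁻¹ * exp (2 * η)) • Estd 3 1
    - exp (-θ + η - t) • Estd 3 2

def J₂ : Matrix (Fin 4) (Fin 4) ℂ :=
  1 - exp (-θ + η + t) • Estd 0 1 + ((1 - γ)⁻¹ * exp (2 * η)) • Estd 3 1
    + exp (-θ + η - t) • Estd 3 2

def J₃ : Matrix (Fin 4) (Fin 4) ℂ :=
  1 + exp (θ - η - t) • Estd 1 0 + ((1 - γ)⁻¹ * exp (2 * θ)) • Estd 2 0
    - exp (θ - η + t) • Estd 2 3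

def J₄ : Matrix (Fin 4) (Fin 4) ℂ :=
  1 - exp (θ - η - t) • Estd 1 0 + ((1 - γ)⁻¹ * exp (2 * θ)) • Estd 2 0
    + exp (θ - η + t) • Estd 2 3

lemma J₁_sub_one_mul_self : (J₁ γ θ η t - 1) * (J₁ γ θ η t - 1) = 0 := by
  simp [J₁, Estd, add_mul, mul_add, sub_mul, mul_sub]

lemma J₂_sub_one_mul_self : (J₂ γ θ η t - 1) * (J₂ γ θ η t - 1) = 0 := by
  simp [J₂, Estd, add_mul, mul_add, sub_mul, mul_sub]

lemma J₃_sub_one_mul_self : (J₃ γ θ η t - 1) * (J₃ γ θ η t - 1) = 0 := by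
  simp [J₃, Estd, add_mul, mul_add, sub_mul, mul_sub]

lemma J₄_sub_one_mul_self : (J₄ γ θ η t - 1) * (J₄ γ θ η t - 1) = 0 := by
  simp [J₄, Estd, add_mul, mul_add, sub_mul, mul_sub]

lemma continuous_J₁ : Continuous fun p : ℂ × ℂ × ℂ => J₁ γ p.1 p.2.1 p.2.2 := by
  unfold J₁; fun_prop

lemma continuous_J₂ : Continuous fun p : ℂ × ℂ × ℂ => J₂ γ p.1 p.2.1 p.2.2 := by
  unfold J₂; fun_prop

lemma continuous_J₃ : Continuous fun p : ℂ × ℂ × ℂ => J₃ γ p.1 p.2.1 p.2.2 := by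
  unfold J₃; fun_prop

lemma continuous_J₄ : Continuous fun p : ℂ × ℂ × ℂ => J₄ γ p.1 p.2.1 p.2.2 := by
  unfold J₄; fun_prop

end LensFactors

def JL (γ θ a b t : ℂ) : Matrix (Fin 4) (Fin 4) ℂ :=
  !![1, 0, (1 - γ) * exp (-2 * θ), (1 - γ) * exp (-θ - a + t);
     0, exp (a - b), (1 - γ) * exp (-θ - b - t), 1 - γ;
     0, 0, 1, 0;
     0, 0, 0, exp (b - a)]

def PL (γ : ℂ) : Matrix (Fin 4) (Fin 4) ℂ :=
  !![1, 0, 0, 0; 0, 0, 0, 1 - γ; 0, 0, 1, 0; 0, (γ - 1)⁻¹, 0, 0]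

def JR (γ θ a b t : ℂ) : Matrix (Fin 4) (Fin 4) ℂ :=
  !![exp (a - b), 0, 1 - γ, (1 - γ) * exp (-b - θ + t);
     0, 1, (1 - γ) * exp (-a - θ - t), (1 - γ) * exp (-2 * θ);
     0, 0, exp (b - a), 0;
     0, 0, 0, 1]

def PR (γ : ℂ) : Matrix (Fin 4) (Fin 4) ℂ :=
  !![0, 0, 1 - γ, 0; 0, 1, 0, 0; (γ - 1)⁻¹, 0, 0, 0; 0, 0, 0, 1]

lemma JL_eq_J₁_mul_PL_mul_J₂ {γ : ℂ} (hγ : γ ≠ 1) (θ t : ℂ) {a b : ℂ} (hab : a + b = 0) :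
    JL γ θ a b t = J₁ γ θ b t * PL γ * J₂ γ θ a t := by
  obtain rfl : b = -a := eq_neg_of_add_eq_zero_right hab
  ext i j
  fin_cases i <;> fin_cases j <;>
    simp [JL, PL, J₁, J₂, Estd, Matrix.mul_apply, Fin.sum_univ_four, Matrix.single_apply,
      Matrix.one_apply, exp_add, exp_sub, exp_neg, two_mul] <;> field_simp <;> ring

lemma JR_eq_J₃_mul_PR_mul_J₄ {γ : ℂ} (hγ : γ ≠ 1) (θ t : ℂ) {a b : ℂ} (hab : a + b = 0) :
    JR γ θ a b t = J₃ γ b θ t * PR γ * J₄ γ a θ t := by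
  obtain rfl : b = -a := eq_neg_of_add_eq_zero_right hab
  ext i j
  fin_cases i <;> fin_cases j <;>
    simp [JR, PR, J₃, J₄, Estd, Matrix.mul_apply, Fin.sum_univ_four, Matrix.single_apply,
      Matrix.one_apply, exp_add, exp_sub, exp_neg, two_mul] <;> field_simp <;> ring

section BoundaryValues

variable (r₁ r₂ s₁ s₂ : ℝ) {s : ℝ} (τ : ℝ) {γ x : ℝ}

theorem exists_JL_factorization (hs : 0 < s) (hγ : γ ≠ 1) (hx : x < 0) :
    ∃ (a b : ℂ) (M₁ M₂ : Matrix (Fin 4) (Fin 4) ℂ),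
      Tendsto (fun ε : ℝ => theta2 r₂ s₂ ((s * x : ℝ) + ε * I)) (𝓝[>] 0) (𝓝 a) ∧
      Tendsto (fun ε : ℝ => theta2 r₂ s₂ ((s * x : ℝ) - ε * I)) (𝓝[>] 0) (𝓝 b) ∧
      Tendsto (fun ε : ℝ => sfJ1 r₁ r₂ s₁ s₂ s τ γ ((x : ℂ) - ε * I)) (𝓝[>] 0) (𝓝 M₁) ∧
      Tendsto (fun ε : ℝ => sfJ2 r₁ r₂ s₁ s₂ s τ γ ((x : ℂ) + ε * I)) (𝓝[>] 0) (𝓝 M₂) ∧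
      JL γ (theta1 r₁ s₁ (s * x : ℝ)) a b (2 * τ * s * x) = M₁ * PL γ * M₂ := by
  have hsx : s * x < 0 := mul_neg_of_pos_of_neg hs hx
  have hzu := tendsto_mul_add_mul_I_nhdsWithin_im_pos hs x
  have hzl := tendsto_mul_sub_mul_I_nhdsWithin_im_neg hs x
  have hθ₁ := (continuousAt_theta1 (neg_ofReal_mem_slitPlane.2 hsx) r₁ s₁).tendsto
  have hθ₂u := tendsto_theta2_nhdsWithin_im_pos hsx r₂ s₂
  have hθ₂l := tendsto_theta2_nhdsWithin_im_neg hsx r₂ s₂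
  have htu := (tendsto_ofReal_add_mul_I_nhdsWithin_im_pos x).mono_right nhdsWithin_le_nhds
  have htl := (tendsto_ofReal_sub_mul_I_nhdsWithin_im_neg x).mono_right nhdsWithin_le_nhds
  exact ⟨_, _, _, _, hθ₂u.comp (tendsto_ofReal_add_mul_I_nhdsWithin_im_pos _),
    hθ₂l.comp (tendsto_ofReal_sub_mul_I_nhdsWithin_im_neg _),
    (continuous_J₁ γ).tendsto_comp₃ (hθ₁.comp (hzl.mono_right nhdsWithin_le_nhds))
      (hθ₂l.comp hzl) (htl.const_mul _),
    (continuous_J₂ γ).tendsto_comp₃ (hθ₁.comp (hzu.mono_right nhdsWithin_le_nhds))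
      (hθ₂u.comp hzu) (htu.const_mul _),
    JL_eq_J₁_mul_PL_mul_J₂ (by exact_mod_cast hγ) _ _ (add_neg_cancel _)⟩

theorem exists_JR_factorization (hs : 0 < s) (hγ : γ ≠ 1) (hx : 0 < x) :
    ∃ (a b : ℂ) (M₃ M₄ : Matrix (Fin 4) (Fin 4) ℂ),
      Tendsto (fun ε : ℝ => theta1 r₁ s₁ ((s * x : ℝ) + ε * I)) (𝓝[>] 0) (𝓝 a) ∧
      Tendsto (fun ε : ℝ => theta1 r₁ s₁ ((s * x : ℝ) - ε * I)) (𝓝[>] 0) (𝓝 b) ∧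
      Tendsto (fun ε : ℝ => sfJ3 r₁ r₂ s₁ s₂ s τ γ ((x : ℂ) - ε * I)) (𝓝[>] 0) (𝓝 M₃) ∧
      Tendsto (fun ε : ℝ => sfJ4 r₁ r₂ s₁ s₂ s τ γ ((x : ℂ) + ε * I)) (𝓝[>] 0) (𝓝 M₄) ∧
      JR γ (theta2 r₂ s₂ (s * x : ℝ)) a b (2 * τ * s * x) = M₃ * PR γ * M₄ := by
  have hsx : 0 < s * x := mul_pos hs hx
  have hzu := tendsto_mul_add_mul_I_nhdsWithin_im_pos hs x
  have hzl := tendsto_mul_sub_mul_I_nhdsWithin_im_neg hs x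
  have hθ₂ := (continuousAt_theta2 (ofReal_mem_slitPlane.2 hsx) r₂ s₂).tendsto
  have hθ₁u := tendsto_theta1_nhdsWithin_im_pos hsx r₁ s₁
  have hθ₁l := tendsto_theta1_nhdsWithin_im_neg hsx r₁ s₁
  have htu := (tendsto_ofReal_add_mul_I_nhdsWithin_im_pos x).mono_right nhdsWithin_le_nhds
  have htl := (tendsto_ofReal_sub_mul_I_nhdsWithin_im_neg x).mono_right nhdsWithin_le_nhds
  exact ⟨_, _, _, _, hθ₁u.comp (tendsto_ofReal_add_mul_I_nhdsWithin_im_pos _),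
    hθ₁l.comp (tendsto_ofReal_sub_mul_I_nhdsWithin_im_neg _),
    (continuous_J₃ γ).tendsto_comp₃ (hθ₁l.comp hzl)
      (hθ₂.comp (hzl.mono_right nhdsWithin_le_nhds)) (htl.const_mul _),
    (continuous_J₄ γ).tendsto_comp₃ (hθ₁u.comp hzu)
      (hθ₂.comp (hzu.mono_right nhdsWithin_le_nhds)) (htu.const_mul _),
    JR_eq_J₃_mul_PR_mul_J₄ (by exact_mod_cast hγ) _ _ (neg_add_cancel _)⟩

end BoundaryValues

end GapTacnode

end

open GapTacnode

theorem gap_tacnode_lens_opening_factorization_general (r₁ r₂ s₁ s₂ : ℝ)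
    (s τ γ : ℝ) (hs : 0 < s) (hγ : γ ∈ Set.Ioo (0:ℝ) 1) :
    (∀ z : ℂ, z.im ≠ 0 →
      (sfJ1 r₁ r₂ s₁ s₂ s τ γ z)⁻¹ = 2 • (1 : Matrix (Fin 4) (Fin 4) ℂ) - sfJ1 r₁ r₂ s₁ s₂ s τ γ z ∧
      (sfJ2 r₁ r₂ s₁ s₂ s τ γ z)⁻¹ = 2 • (1 : Matrix (Fin 4) (Fin 4) ℂ) - sfJ2 r₁ r₂ s₁ s₂ s τ γ z ∧
      (sfJ3 r₁ r₂ s₁ s₂ s τ γ z)⁻¹ = 2 • (1 : Matrix (Fin 4) (Fin 4) ℂ) - sfJ3 r₁ r₂ s₁ s₂ s τ γ z ∧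
      (sfJ4 r₁ r₂ s₁ s₂ s τ γ z)⁻¹ = 2 • (1 : Matrix (Fin 4) (Fin 4) ℂ) - sfJ4 r₁ r₂ s₁ s₂ s τ γ z) ∧
    (∀ x : ℝ, -1 < x → x < 0 →
      ∃ (a b : ℂ) (M₁ M₂ : Matrix (Fin 4) (Fin 4) ℂ),
        Tendsto (fun ε : ℝ => theta2 r₂ s₂ ((s * x : ℝ) + ε * Complex.I)) (𝓝[>] (0:ℝ)) (𝓝 a) ∧
        Tendsto (fun ε : ℝ => theta2 r₂ s₂ ((s * x : ℝ) - ε * Complex.I)) (𝓝[>] (0:ℝ)) (𝓝 b) ∧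
        Tendsto (fun ε : ℝ => sfJ1 r₁ r₂ s₁ s₂ s τ γ ((x:ℂ) - ε * Complex.I)) (𝓝[>] (0:ℝ)) (𝓝 M₁) ∧
        Tendsto (fun ε : ℝ => sfJ2 r₁ r₂ s₁ s₂ s τ γ ((x:ℂ) + ε * Complex.I)) (𝓝[>] (0:ℝ)) (𝓝 M₂) ∧
        !![1, 0, ((1:ℂ) - γ) * Complex.exp (-2 * theta1 r₁ s₁ ((s * x : ℝ) : ℂ)),
              ((1:ℂ) - γ) * Complex.exp (-theta1 r₁ s₁ ((s * x : ℝ) : ℂ) - a + 2 * τ * s * x);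
           0, Complex.exp (a - b),
              ((1:ℂ) - γ) * Complex.exp (-theta1 r₁ s₁ ((s * x : ℝ) : ℂ) - b - 2 * τ * s * x),
              (1:ℂ) - γ;
           0, 0, 1, 0;
           0, 0, 0, Complex.exp (b - a)]
          = M₁ * !![1, 0, 0, 0;
                    0, 0, 0, (1:ℂ) - γ;
                    0, 0, 1, 0;
                    0, ((γ:ℂ) - 1)⁻¹, 0, 0] * M₂) ∧
    (∀ x : ℝ, 0 < x → x < 1 →
      ∃ (a b : ℂ) (M₃ M₄ : Matrix (Fin 4) (Fin 4) ℂ),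
        Tendsto (fun ε : ℝ => theta1 r₁ s₁ ((s * x : ℝ) + ε * Complex.I)) (𝓝[>] (0:ℝ)) (𝓝 a) ∧
        Tendsto (fun ε : ℝ => theta1 r₁ s₁ ((s * x : ℝ) - ε * Complex.I)) (𝓝[>] (0:ℝ)) (𝓝 b) ∧
        Tendsto (fun ε : ℝ => sfJ3 r₁ r₂ s₁ s₂ s τ γ ((x:ℂ) - ε * Complex.I)) (𝓝[>] (0:ℝ)) (𝓝 M₃) ∧
        Tendsto (fun ε : ℝ => sfJ4 r₁ r₂ s₁ s₂ s τ γ ((x:ℂ) + ε * Complex.I)) (𝓝[>] (0:ℝ)) (𝓝 M₄) ∧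
        !![Complex.exp (a - b), 0, (1:ℂ) - γ,
              ((1:ℂ) - γ) * Complex.exp (-b - theta2 r₂ s₂ ((s * x : ℝ) : ℂ) + 2 * τ * s * x);
           0, 1, ((1:ℂ) - γ) * Complex.exp (-a - theta2 r₂ s₂ ((s * x : ℝ) : ℂ) - 2 * τ * s * x),
              ((1:ℂ) - γ) * Complex.exp (-2 * theta2 r₂ s₂ ((s * x : ℝ) : ℂ));
           0, 0, Complex.exp (b - a), 0;
           0, 0, 0, 1]
          = M₃ * !![0, 0, (1:ℂ) - γ, 0;
                    0, 1, 0, 0;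
                    ((γ:ℂ) - 1)⁻¹, 0, 0, 0;
                    0, 0, 0, 1] * M₄) := by
  have hγ₁ : γ ≠ 1 := hγ.2.ne
  refine ⟨fun z _ => ⟨?_, ?_, ?_, ?_⟩, fun x _ hx => ?_, fun x hx _ => ?_⟩
  · exact Matrix.inv_eq_right_inv (mul_two_smul_one_sub_self (J₁_sub_one_mul_self _ _ _ _))
  · exact Matrix.inv_eq_right_inv (mul_two_smul_one_sub_self (J₂_sub_one_mul_self _ _ _ _))
  · exact Matrix.inv_eq_right_inv (mul_two_smul_one_sub_self (J₃_sub_one_mul_self _ _ _ _))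
  · exact Matrix.inv_eq_right_inv (mul_two_smul_one_sub_self (J₄_sub_one_mul_self _ _ _ _))
  · exact exists_JL_factorization r₁ r₂ s₁ s₂ τ hs hγ₁ hx
  · exact exists_JR_factorization r₁ r₂ s₁ s₂ τ hs hγ₁ hx

/-- (a) `𝖩ⱼ(z)⁻¹ = 2I − 𝖩ⱼ(z)` off `ℝ`; (b) the factorization of the jump matrix `𝖩_𝖫` on
`(-1,0)`; (c) the factorization of the jump matrix `𝖩_𝖱` on `(0,1)`. -/
theorem gap_tacnode_lens_opening_factorization (r₁ r₂ s₁ s₂ : ℝ)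
    (hr₁ : 0 < r₁) (hr₂ : 0 < r₂) (s τ γ : ℝ) (hs : 0 < s) (hγ : γ ∈ Set.Ioo (0:ℝ) 1) :
    (∀ z : ℂ, z.im ≠ 0 →
      (sfJ1 r₁ r₂ s₁ s₂ s τ γ z)⁻¹ = 2 • (1 : Matrix (Fin 4) (Fin 4) ℂ) - sfJ1 r₁ r₂ s₁ s₂ s τ γ z ∧
      (sfJ2 r₁ r₂ s₁ s₂ s τ γ z)⁻¹ = 2 • (1 : Matrix (Fin 4) (Fin 4) ℂ) - sfJ2 r₁ r₂ s₁ s₂ s τ γ z ∧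
      (sfJ3 r₁ r₂ s₁ s₂ s τ γ z)⁻¹ = 2 • (1 : Matrix (Fin 4) (Fin 4) ℂ) - sfJ3 r₁ r₂ s₁ s₂ s τ γ z ∧
      (sfJ4 r₁ r₂ s₁ s₂ s τ γ z)⁻¹ = 2 • (1 : Matrix (Fin 4) (Fin 4) ℂ) - sfJ4 r₁ r₂ s₁ s₂ s τ γ z) ∧
    (∀ x : ℝ, -1 < x → x < 0 →
      ∃ (a b : ℂ) (M₁ M₂ : Matrix (Fin 4) (Fin 4) ℂ),
        Tendsto (fun ε : ℝ => theta2 r₂ s₂ ((s * x : ℝ) + ε * Complex.I)) (𝓝[>] (0:ℝ)) (𝓝 a) ∧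
        Tendsto (fun ε : ℝ => theta2 r₂ s₂ ((s * x : ℝ) - ε * Complex.I)) (𝓝[>] (0:ℝ)) (𝓝 b) ∧
        Tendsto (fun ε : ℝ => sfJ1 r₁ r₂ s₁ s₂ s τ γ ((x:ℂ) - ε * Complex.I)) (𝓝[>] (0:ℝ)) (𝓝 M₁) ∧
        Tendsto (fun ε : ℝ => sfJ2 r₁ r₂ s₁ s₂ s τ γ ((x:ℂ) + ε * Complex.I)) (𝓝[>] (0:ℝ)) (𝓝 M₂) ∧
        !![1, 0, ((1:ℂ) - γ) * Complex.exp (-2 * theta1 r₁ s₁ ((s * x : ℝ) : ℂ)),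
              ((1:ℂ) - γ) * Complex.exp (-theta1 r₁ s₁ ((s * x : ℝ) : ℂ) - a + 2 * τ * s * x);
           0, Complex.exp (a - b),
              ((1:ℂ) - γ) * Complex.exp (-theta1 r₁ s₁ ((s * x : ℝ) : ℂ) - b - 2 * τ * s * x),
              (1:ℂ) - γ;
           0, 0, 1, 0;
           0, 0, 0, Complex.exp (b - a)]
          = M₁ * !![1, 0, 0, 0;
                    0, 0, 0, (1:ℂ) - γ;
                    0, 0, 1, 0;
                    0, ((γ:ℂ) - 1)⁻¹, 0, 0] * M₂) ∧
    (∀ x : ℝ, 0 < x → x < 1 →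
      ∃ (a b : ℂ) (M₃ M₄ : Matrix (Fin 4) (Fin 4) ℂ),
        Tendsto (fun ε : ℝ => theta1 r₁ s₁ ((s * x : ℝ) + ε * Complex.I)) (𝓝[>] (0:ℝ)) (𝓝 a) ∧
        Tendsto (fun ε : ℝ => theta1 r₁ s₁ ((s * x : ℝ) - ε * Complex.I)) (𝓝[>] (0:ℝ)) (𝓝 b) ∧
        Tendsto (fun ε : ℝ => sfJ3 r₁ r₂ s₁ s₂ s τ γ ((x:ℂ) - ε * Complex.I)) (𝓝[>] (0:ℝ)) (𝓝 M₃) ∧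
        Tendsto (fun ε : ℝ => sfJ4 r₁ r₂ s₁ s₂ s τ γ ((x:ℂ) + ε * Complex.I)) (𝓝[>] (0:ℝ)) (𝓝 M₄) ∧
        !![Complex.exp (a - b), 0, (1:ℂ) - γ,
              ((1:ℂ) - γ) * Complex.exp (-b - theta2 r₂ s₂ ((s * x : ℝ) : ℂ) + 2 * τ * s * x);
           0, 1, ((1:ℂ) - γ) * Complex.exp (-a - theta2 r₂ s₂ ((s * x : ℝ) : ℂ) - 2 * τ * s * x),
              ((1:ℂ) - γ) * Complex.exp (-2 * theta2 r₂ s₂ ((s * x : ℝ) : ℂ));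
           0, 0, Complex.exp (b - a), 0;
           0, 0, 0, 1]
          = M₃ * !![0, 0, (1:ℂ) - γ, 0;
                    0, 1, 0, 0;
                    ((γ:ℂ) - 1)⁻¹, 0, 0, 0;
                    0, 0, 0, 1] * M₄) :=
  gap_tacnode_lens_opening_factorization_general r₁ r₂ s₁ s₂ s τ γ hs hγ
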